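/- Let G and H be graphs, let g be a vertex of G and h a vertex of H, and let G ∨ H be the one-point join formed from the disjoint union of G and H by identifying g with h. Then |G ∨ H|(q) = |G|(q) + |H|(q) − 1 in ℚ(q); in particular, the magnitude of the one-point join does not depend on the choice of vertices g and h. -/

import Mathlib

open scoped Classical in
/-- `q ^ d` for an extended natural number `d`, with the convention `q ^ ∞ = 0`. -/
noncomputable def qExp (d : ℕ∞) : RatFunc ℚ :=
  if d = ⊤ then 0 else RatFunc.X ^ d.toNat

/-- The matrix `Z_G(q)` whose `(x, y)` entry is `q ^ d(x, y)`. -/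
noncomputable def magMatrix {V : Type*} [Fintype V] (G : SimpleGraph V) :
    Matrix V V (RatFunc ℚ) :=
  Matrix.of fun x y => qExp (G.edist x y)

/-- The magnitude of a graph: the sum of all entries of `Z_G(q)⁻¹`. -/
noncomputable def magnitude {V : Type*} [Fintype V] [DecidableEq V] (G : SimpleGraph V) :
    RatFunc ℚ :=
  ∑ x, ∑ y, (magMatrix G)⁻¹ x y

/-- The weighting of a graph: `w_G x` is the `x`-th row sum of `Z_G(q)⁻¹`. -/
noncomputable def weighting {V : Type*} [Fintype V] [DecidableEq V] (G : SimpleGraph V)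
    (x : V) : RatFunc ℚ :=
  ∑ y, (magMatrix G)⁻¹ x y

set_option linter.unusedSectionVars false

lemma qExp_zero : qExp 0 = 1 := by simp [qExp]

lemma qExp_add (a b : ℕ∞) : qExp (a + b) = qExp a * qExp b := by
  rcases eq_or_ne a ⊤ with ha | ha
  · simp [qExp, ha]
  rcases eq_or_ne b ⊤ with hb | hb
  · simp [qExp, hb]
  have : a + b ≠ ⊤ := WithTop.add_ne_top.mpr ⟨ha, hb⟩
  simp [qExp, ha, hb, this, ENat.toNat_add ha hb, pow_add]

lemma magMatrix_isUnit_det {V : Type*} [Fintype V] [DecidableEq V] (G : SimpleGraph V) :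
    IsUnit (magMatrix G).det := by
  classical
  set P : Matrix V V (Polynomial ℚ) :=
    Matrix.of (fun x y => if G.edist x y = ⊤ then 0 else Polynomial.X ^ (G.edist x y).toNat)
    with hP
  have hmap : magMatrix G = P.map (algebraMap (Polynomial ℚ) (RatFunc ℚ)) := by
    ext x y
    by_cases hd : G.edist x y = ⊤ <;>
      simp [magMatrix, qExp, P, hd, Matrix.map_apply, ← RatFunc.algebraMap_X, map_pow]
  have heval : Polynomial.eval 0 P.det = 1 := by
    have hPmap : P.map ⇑(Polynomial.evalRingHom (0 : ℚ)) = 1 := by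
      ext x y
      by_cases hxy : x = y
      · subst hxy
        simp [P, Matrix.map_apply, SimpleGraph.edist_self, Matrix.one_apply]
      · have hne : G.edist x y ≠ 0 := by
          simp [SimpleGraph.edist_eq_zero_iff, hxy]
        by_cases hd : G.edist x y = ⊤
        · simp [P, Matrix.map_apply, hd, Matrix.one_apply, hxy]
        · have hpos : (G.edist x y).toNat ≠ 0 := by
            simp [ENat.toNat_eq_zero, hne, hd]
          simp [P, Matrix.map_apply, hd, Matrix.one_apply, hxy,
            Polynomial.eval_pow, zero_pow hpos]
    calc Polynomial.eval 0 P.det = (Polynomial.evalRingHom (0 : ℚ)) P.det := rfl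
      _ = (P.map ⇑(Polynomial.evalRingHom (0 : ℚ))).det := by
          rw [RingHom.map_det, RingHom.mapMatrix_apply]
      _ = 1 := by rw [hPmap, Matrix.det_one]
  have hPdet : P.det ≠ 0 := fun hc => by simp [hc] at heval
  have : (magMatrix G).det = algebraMap (Polynomial ℚ) (RatFunc ℚ) P.det := by
    rw [hmap, ← RingHom.mapMatrix_apply, ← RingHom.map_det]
  rw [this, isUnit_iff_ne_zero]
  intro hc
  exact hPdet (RatFunc.algebraMap_injective ℚ (by simpa using hc))

lemma weighting_rowsum {V : Type*} [Fintype V] [DecidableEq V] (G : SimpleGraph V) (x : V) :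
    ∑ y, magMatrix G x y * weighting G y = 1 := by
  classical
  have hker : magMatrix G * (magMatrix G)⁻¹ = 1 :=
    Matrix.mul_nonsing_inv _ (magMatrix_isUnit_det G)
  have : ∑ y, magMatrix G x y * weighting G y
      = ∑ z, (magMatrix G * (magMatrix G)⁻¹) x z := by
    simp only [weighting, Finset.mul_sum, Matrix.mul_apply]
    rw [Finset.sum_comm]
  rw [this, hker]
  simp [Matrix.one_apply]

lemma magnitude_eq_sum_of_weighting {V : Type*} [Fintype V] [DecidableEq V]
    (G : SimpleGraph V) (w : V → RatFunc ℚ)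
    (hw : ∀ x, ∑ y, magMatrix G x y * w y = 1) :
    magnitude G = ∑ x, w x := by
  classical
  have hinv : (magMatrix G)⁻¹ * magMatrix G = 1 :=
    Matrix.nonsing_inv_mul _ (magMatrix_isUnit_det G)
  have hmv : (magMatrix G).mulVec w = fun _ => 1 := by
    funext x
    simpa [Matrix.mulVec, dotProduct] using hw x
  have hw' : w = (magMatrix G)⁻¹.mulVec (fun _ => (1 : RatFunc ℚ)) := by
    rw [← hmv, Matrix.mulVec_mulVec, hinv, Matrix.one_mulVec]
  have : ∀ x, weighting G x = w x := by
    intro x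
    rw [hw']
    simp [weighting, Matrix.mulVec, dotProduct]
  simp only [magnitude]
  exact Finset.sum_congr rfl fun x _ => this x

/-- The one-point join `G ∨ H`: the disjoint union of `G` and `H` with the vertex `g` of
`G` identified with the vertex `h` of `H` (the vertex `Sum.inl g` is the identified
vertex). -/
def onePointJoin {V W : Type*} (G : SimpleGraph V) (H : SimpleGraph W) (g : V) (h : W) :
    SimpleGraph (V ⊕ {w : W // w ≠ h}) :=
  SimpleGraph.fromRel fun x y =>
    match x, y with
    | Sum.inl a, Sum.inl b => G.Adj a b
    | Sum.inl a, Sum.inr b => a = g ∧ H.Adj h b.1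
    | Sum.inr a, Sum.inr b => H.Adj a.1 b.1
    | Sum.inr _, Sum.inl _ => False


section JoinDist

variable {V W : Type*} (G : SimpleGraph V) (H : SimpleGraph W) (g : V) (h : W)

/-- candidate distance function on the one-point join -/
noncomputable def joinD : (V ⊕ {w : W // w ≠ h}) → (V ⊕ {w : W // w ≠ h}) → ℕ∞
  | Sum.inl a, Sum.inl b => G.edist a b
  | Sum.inl a, Sum.inr b => G.edist a g + H.edist h b.1
  | Sum.inr a, Sum.inl b => H.edist a.1 h + G.edist g b
  | Sum.inr a, Sum.inr b => H.edist a.1 b.1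

lemma edist_le_adj_add {V : Type*} (G : SimpleGraph V) {a c : V} (hac : G.Adj a c) (b : V) :
    G.edist a b ≤ G.edist c b + 1 := by
  calc G.edist a b ≤ G.edist a c + G.edist c b := SimpleGraph.edist_triangle
    _ = 1 + G.edist c b := by rw [SimpleGraph.edist_eq_one_iff_adj.mpr hac]
    _ = G.edist c b + 1 := add_comm _ _

lemma joinD_lipschitz {x z : V ⊕ {w : W // w ≠ h}} (hadj : (onePointJoin G H g h).Adj x z)
    (y : V ⊕ {w : W // w ≠ h}) :
    joinD G H g h x y ≤ joinD G H g h z y + 1 := by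
  rw [onePointJoin, SimpleGraph.fromRel_adj] at hadj
  obtain ⟨hne, hr⟩ := hadj
  cases x with
  | inl a =>
    cases z with
    | inl c =>
      have hac : G.Adj a c := by
        rcases hr with hr | hr
        · exact hr
        · exact hr.symm
      cases y with
      | inl b => exact edist_le_adj_add G hac b
      | inr b =>
        show G.edist a g + H.edist h b.1 ≤ (G.edist c g + H.edist h b.1) + 1
        rw [add_right_comm]
        exact add_le_add (edist_le_adj_add G hac g) le_rfl
    | inr c =>
      have hc : a = g ∧ H.Adj h c.1 := by
        rcases hr with hr | hr
        · exact hr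
        · exact hr.elim
      obtain ⟨rfl, hhc⟩ := hc
      cases y with
      | inl b =>
        show G.edist a b ≤ (H.edist c.1 h + G.edist a b) + 1
        exact le_add_self.trans (self_le_add_right _ 1)
      | inr b =>
        show G.edist a a + H.edist h b.1 ≤ H.edist c.1 b.1 + 1
        rw [SimpleGraph.edist_self, zero_add]
        exact edist_le_adj_add H hhc b.1
  | inr a =>
    cases z with
    | inl c =>
      have hc : c = g ∧ H.Adj h a.1 := by
        rcases hr with hr | hr
        · exact hr.elim
        · exact hr
      obtain ⟨rfl, hha⟩ := hc
      cases y with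
      | inl b =>
        show H.edist a.1 h + G.edist c b ≤ G.edist c b + 1
        rw [SimpleGraph.edist_eq_one_iff_adj.mpr hha.symm, add_comm]
      | inr b =>
        show H.edist a.1 b.1 ≤ (G.edist c c + H.edist h b.1) + 1
        rw [SimpleGraph.edist_self, zero_add]
        exact edist_le_adj_add H hha.symm b.1
    | inr c =>
      have hac : H.Adj a.1 c.1 := by
        rcases hr with hr | hr
        · exact hr
        · exact hr.symm
      cases y with
      | inl b =>
        show H.edist a.1 h + G.edist g b ≤ (H.edist c.1 h + G.edist g b) + 1
        rw [add_right_comm]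
        exact add_le_add (edist_le_adj_add H hac h) le_rfl
      | inr b => exact edist_le_adj_add H hac b.1

lemma joinD_le_length {x y : V ⊕ {w : W // w ≠ h}} (p : (onePointJoin G H g h).Walk x y) :
    joinD G H g h x y ≤ p.length := by
  induction p with
  | nil =>
    rename_i u
    cases u with
    | inl a => simp [joinD, SimpleGraph.edist_self]
    | inr a => simp [joinD, SimpleGraph.edist_self]
  | cons hadj q ih =>
    refine (joinD_lipschitz G H g h hadj _).trans ?_
    rw [SimpleGraph.Walk.length_cons, Nat.cast_add, Nat.cast_one]
    exact add_le_add ih le_rfl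

lemma joinD_le_edist (x y : V ⊕ {w : W // w ≠ h}) :
    joinD G H g h x y ≤ (onePointJoin G H g h).edist x y := by
  rcases eq_or_ne ((onePointJoin G H g h).edist x y) ⊤ with hd | hd
  · rw [hd]; exact le_top
  · obtain ⟨p, hp⟩ := SimpleGraph.exists_walk_of_edist_ne_top hd
    rw [← hp]
    exact joinD_le_length G H g h p

end JoinDist

section JoinDist2

variable {V W : Type*} (G : SimpleGraph V) (H : SimpleGraph W) (g : V) (h : W)

lemma edist_hom_le {V' W' : Type*} {G' : SimpleGraph V'} {H' : SimpleGraph W'}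
    (f : G' →g H') (a b : V') : H'.edist (f a) (f b) ≤ G'.edist a b := by
  rcases eq_or_ne (G'.edist a b) ⊤ with hd | hd
  · rw [hd]; exact le_top
  · obtain ⟨p, hp⟩ := SimpleGraph.exists_walk_of_edist_ne_top hd
    rw [← hp]
    calc H'.edist (f a) (f b) ≤ (p.map f).length := SimpleGraph.edist_le _
      _ = p.length := by rw [SimpleGraph.Walk.length_map]

/-- inclusion of `G` into the join -/
def joinInl : G →g onePointJoin G H g h where
  toFun := Sum.inl
  map_rel' := by
    intro a b hab
    rw [onePointJoin, SimpleGraph.fromRel_adj]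
    exact ⟨by simpa using hab.ne, Or.inl hab⟩

open scoped Classical in
/-- inclusion of `H` into the join -/
noncomputable def joinInr : H →g onePointJoin G H g h where
  toFun := fun w => if hw : w = h then Sum.inl g else Sum.inr ⟨w, hw⟩
  map_rel' := by
    intro a b hab
    show (onePointJoin G H g h).Adj
      (if ha : a = h then Sum.inl g else Sum.inr ⟨a, ha⟩)
      (if hb : b = h then Sum.inl g else Sum.inr ⟨b, hb⟩)
    by_cases ha : a = h <;> by_cases hb : b = h
    · exact absurd (ha.trans hb.symm) hab.ne
    · rw [dif_pos ha, dif_neg hb]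
      subst ha
      rw [onePointJoin, SimpleGraph.fromRel_adj]
      exact ⟨by simp, Or.inl ⟨rfl, hab⟩⟩
    · rw [dif_neg ha, dif_pos hb]
      subst hb
      rw [onePointJoin, SimpleGraph.fromRel_adj]
      exact ⟨by simp, Or.inr ⟨rfl, hab.symm⟩⟩
    · rw [dif_neg ha, dif_neg hb]
      rw [onePointJoin, SimpleGraph.fromRel_adj]
      exact ⟨by simp [Subtype.ext_iff, hab.ne], Or.inl hab⟩

open scoped Classical in
lemma joinInr_apply (b : W) :
    (joinInr G H g h) b = if hw : b = h then Sum.inl g else Sum.inr ⟨b, hw⟩ := rfl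

lemma joinInr_apply_ne {b : W} (hb : b ≠ h) :
    (joinInr G H g h) b = Sum.inr ⟨b, hb⟩ := by rw [joinInr_apply, dif_neg hb]

lemma joinInr_apply_h : (joinInr G H g h) h = Sum.inl g := by
  rw [joinInr_apply, dif_pos rfl]

lemma join_edist (x y : V ⊕ {w : W // w ≠ h}) :
    (onePointJoin G H g h).edist x y = joinD G H g h x y := by
  refine le_antisymm ?_ (joinD_le_edist G H g h x y)
  have hVV : ∀ a b : V,
      (onePointJoin G H g h).edist (Sum.inl a) (Sum.inl b) ≤ G.edist a b := fun a b =>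
    edist_hom_le (joinInl G H g h) a b
  have hWW : ∀ a b : W,
      (onePointJoin G H g h).edist (joinInr G H g h a) (joinInr G H g h b) ≤ H.edist a b :=
    fun a b => edist_hom_le (joinInr G H g h) a b
  cases x with
  | inl a =>
    cases y with
    | inl b => exact hVV a b
    | inr b =>
      show _ ≤ G.edist a g + H.edist h b.1
      calc (onePointJoin G H g h).edist (Sum.inl a) (Sum.inr b)
          ≤ (onePointJoin G H g h).edist (Sum.inl a) (Sum.inl g)
            + (onePointJoin G H g h).edist (Sum.inl g) (Sum.inr b) :=
            SimpleGraph.edist_triangle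
        _ ≤ G.edist a g + H.edist h b.1 := by
            refine add_le_add (hVV a g) ?_
            have := hWW h b.1
            rwa [joinInr_apply_h, joinInr_apply_ne G H g h b.2, Subtype.coe_eta] at this
  | inr a =>
    cases y with
    | inl b =>
      show _ ≤ H.edist a.1 h + G.edist g b
      calc (onePointJoin G H g h).edist (Sum.inr a) (Sum.inl b)
          ≤ (onePointJoin G H g h).edist (Sum.inr a) (Sum.inl g)
            + (onePointJoin G H g h).edist (Sum.inl g) (Sum.inl b) :=
            SimpleGraph.edist_triangle
        _ ≤ H.edist a.1 h + G.edist g b := by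
            refine add_le_add ?_ (hVV g b)
            have := hWW a.1 h
            rwa [joinInr_apply_h, joinInr_apply_ne G H g h a.2, Subtype.coe_eta] at this
    | inr b =>
      show _ ≤ H.edist a.1 b.1
      have := hWW a.1 b.1
      rwa [joinInr_apply_ne G H g h a.2, joinInr_apply_ne G H g h b.2,
        Subtype.coe_eta, Subtype.coe_eta] at this

end JoinDist2

section Final

variable {V W : Type*} [Fintype V] [DecidableEq V] [Fintype W] [DecidableEq W]
  (G : SimpleGraph V) (H : SimpleGraph W) (g : V) (h : W)

/-- candidate weighting on the one-point join -/
noncomputable def joinW : (V ⊕ {w : W // w ≠ h}) → RatFunc ℚ :=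
  Sum.elim (fun a => weighting G a + (if a = g then weighting H h - 1 else 0))
    (fun b => weighting H b.1)

lemma magJ_inl_inl (a b : V) :
    magMatrix (onePointJoin G H g h) (Sum.inl a) (Sum.inl b) = qExp (G.edist a b) := by
  show qExp ((onePointJoin G H g h).edist (Sum.inl a) (Sum.inl b)) = _
  rw [join_edist]
  rfl

lemma magJ_inl_inr (a : V) (b : {w : W // w ≠ h}) :
    magMatrix (onePointJoin G H g h) (Sum.inl a) (Sum.inr b)
      = qExp (G.edist a g) * qExp (H.edist h b.1) := by
  show qExp ((onePointJoin G H g h).edist (Sum.inl a) (Sum.inr b)) = _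
  rw [join_edist]
  exact qExp_add _ _

lemma magJ_inr_inl (a : {w : W // w ≠ h}) (b : V) :
    magMatrix (onePointJoin G H g h) (Sum.inr a) (Sum.inl b)
      = qExp (H.edist a.1 h) * qExp (G.edist g b) := by
  show qExp ((onePointJoin G H g h).edist (Sum.inr a) (Sum.inl b)) = _
  rw [join_edist]
  exact qExp_add _ _

lemma magJ_inr_inr (a b : {w : W // w ≠ h}) :
    magMatrix (onePointJoin G H g h) (Sum.inr a) (Sum.inr b) = qExp (H.edist a.1 b.1) := by
  show qExp ((onePointJoin G H g h).edist (Sum.inr a) (Sum.inr b)) = _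
  rw [join_edist]
  rfl

lemma sum_subtype_ne (f : W → RatFunc ℚ) :
    ∑ b : {w : W // w ≠ h}, f b.1 = (∑ b, f b) - f h := by
  rw [← Finset.sum_erase_eq_sub (Finset.mem_univ h)]
  exact (Finset.sum_subtype (Finset.univ.erase h) (by simp) f).symm

lemma magH_entry (a b : W) : magMatrix H a b = qExp (H.edist a b) := rfl
lemma magG_entry (a b : V) : magMatrix G a b = qExp (G.edist a b) := rfl

lemma joinW_rowsum (x : V ⊕ {w : W // w ≠ h}) :
    ∑ y, magMatrix (onePointJoin G H g h) x y * joinW G H g h y = 1 := by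
  classical
  have hrowG := weighting_rowsum G
  have hrowH := weighting_rowsum H
  cases x with
  | inl a =>
    rw [Fintype.sum_sum_type]
    have h1 : ∑ b : V,
        magMatrix (onePointJoin G H g h) (Sum.inl a) (Sum.inl b) * joinW G H g h (Sum.inl b)
        = 1 + qExp (G.edist a g) * (weighting H h - 1) := by
      simp only [magJ_inl_inl, joinW, Sum.elim_inl, mul_add, Finset.sum_add_distrib]
      congr 1
      · simpa only [magG_entry] using hrowG a
      · rw [Finset.sum_congr rfl (fun b _ => mul_ite (b = g) (qExp (G.edist a b))
          (weighting H h - 1) 0)]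
        simp [Finset.sum_ite_eq']
    have h2 : ∑ b : {w : W // w ≠ h},
        magMatrix (onePointJoin G H g h) (Sum.inl a) (Sum.inr b) * joinW G H g h (Sum.inr b)
        = qExp (G.edist a g) * (1 - weighting H h) := by
      simp only [magJ_inl_inr, joinW, Sum.elim_inr, mul_assoc]
      rw [← Finset.mul_sum]
      congr 1
      rw [sum_subtype_ne h (fun b => qExp (H.edist h b) * weighting H b)]
      have : ∑ b, qExp (H.edist h b) * weighting H b = 1 := by
        simpa only [magH_entry] using hrowH h
      rw [this, SimpleGraph.edist_self, qExp_zero, one_mul]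
    rw [h1, h2]
    ring
  | inr a =>
    rw [Fintype.sum_sum_type]
    have h1 : ∑ b : V,
        magMatrix (onePointJoin G H g h) (Sum.inr a) (Sum.inl b) * joinW G H g h (Sum.inl b)
        = qExp (H.edist a.1 h) * weighting H h := by
      simp only [magJ_inr_inl, joinW, Sum.elim_inl, mul_assoc]
      rw [← Finset.mul_sum]
      congr 1
      simp only [mul_add, Finset.sum_add_distrib]
      have hG : ∑ b, qExp (G.edist g b) * weighting G b = 1 := by
        simpa only [magG_entry] using hrowG g
      rw [hG]
      rw [Finset.sum_congr rfl (fun b _ => mul_ite (b = g) (qExp (G.edist g b))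
        (weighting H h - 1) 0)]
      simp [Finset.sum_ite_eq', SimpleGraph.edist_self, qExp_zero]
    have h2 : ∑ b : {w : W // w ≠ h},
        magMatrix (onePointJoin G H g h) (Sum.inr a) (Sum.inr b) * joinW G H g h (Sum.inr b)
        = 1 - qExp (H.edist a.1 h) * weighting H h := by
      simp only [magJ_inr_inr, joinW, Sum.elim_inr]
      rw [sum_subtype_ne h (fun b => qExp (H.edist a.1 b) * weighting H b)]
      have : ∑ b, qExp (H.edist a.1 b) * weighting H b = 1 := by
        simpa only [magH_entry] using hrowH a.1
      rw [this]
    rw [h1, h2]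
    ring

end Final


/-- The magnitude of a one-point join: `|G ∨ H| = |G| + |H| - 1`, independently of the
chosen vertices. -/
theorem magnitude_onePointJoin
    {V W : Type*} [Fintype V] [DecidableEq V] [Fintype W] [DecidableEq W]
    (G : SimpleGraph V) (H : SimpleGraph W) (g : V) (h : W) :
    magnitude (onePointJoin G H g h) = magnitude G + magnitude H - 1 := by
  classical
  rw [magnitude_eq_sum_of_weighting (onePointJoin G H g h) (joinW G H g h)
    (joinW_rowsum G H g h)]
  rw [Fintype.sum_sum_type]
  have h1 : ∑ a : V, joinW G H g h (Sum.inl a) = magnitude G + (weighting H h - 1) := by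
    simp only [joinW, Sum.elim_inl, Finset.sum_add_distrib, Finset.sum_ite_eq',
      Finset.mem_univ, if_true]
    congr 1
  have h2 : ∑ b : {w : W // w ≠ h}, joinW G H g h (Sum.inr b)
      = magnitude H - weighting H h := by
    simp only [joinW, Sum.elim_inr]
    rw [sum_subtype_ne h (weighting H)]
    congr 1
  rw [h1, h2]
  ring
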